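/- Define the polynomials u_n(y) = Σ_{i≥1} a(n,i) y^i and v_n(y) = Σ_{i≥1} b(n,i) y^i in ℤ[y]. Then v_1(y) = 6y², and for all n ≥ 2, v_n(y) = 6y·u_{n-1}(y) + (3 + 2y + y²)·v_{n-1}(y). Equivalently, in terms of bivariate generating functions T_1(x,y) = Σ_{n≥1} u_n(y) x^n and T_2(x,y) = Σ_{n≥1} v_n(y) x^n, one has T_2 = 6xy² + 6xy·T_1 + 3x·T_2 + 2xy·T_2 + xy²·T_2. -/

import Mathlib

open SimpleGraph Polynomial

/-- A 2-colored partition of a simple graph `G`: a partition of the vertex set into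
nonempty parts, each inducing a connected subgraph, together with an assignment of one
of two colors to each part such that distinct parts joined by an edge get different colors. -/
structure TwoColoredPartition {V : Type*} (G : SimpleGraph V) where
  parts : Set (Set V)
  nonempty : ∀ p ∈ parts, p.Nonempty
  covers : ∀ v : V, ∃ p, p ∈ parts ∧ v ∈ p
  disj : ∀ p ∈ parts, ∀ q ∈ parts, p ≠ q → Disjoint p q
  conn : ∀ p ∈ parts, (G.induce p).Connected
  color : parts → Fin 2
  proper : ∀ p q : parts, p ≠ q →
    (∃ v ∈ (p : Set V), ∃ w ∈ (q : Set V), G.Adj v w) → color p ≠ color q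

/-- The size of a 2-colored partition: its number of parts. -/
noncomputable def TwoColoredPartition.size {V : Type*} {G : SimpleGraph V}
    (T : TwoColoredPartition G) : ℕ :=
  T.parts.ncard

/-- The color of a vertex in a 2-colored partition: the color of the part containing it. -/
noncomputable def TwoColoredPartition.vcolor {V : Type*} {G : SimpleGraph V}
    (T : TwoColoredPartition G) (v : V) : Fin 2 :=
  T.color ⟨(T.covers v).choose, (T.covers v).choose_spec.1⟩

/-- All three vertices of the last triangle of `K₃ × Pₙ` (those whose path coordinate is
the last vertex of the path) have the same color. -/
def sameColorLastTriangle {n : ℕ}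
    (T : TwoColoredPartition ((⊤ : SimpleGraph (Fin 3)) □ pathGraph n)) : Prop :=
  ∀ v w : Fin 3 × Fin n, (v.2 : ℕ) = n - 1 → (w.2 : ℕ) = n - 1 → T.vcolor v = T.vcolor w

/-- Both colors occur among the three vertices of the last triangle of `K₃ × Pₙ`. -/
def bothColorsLastTriangle {n : ℕ}
    (T : TwoColoredPartition ((⊤ : SimpleGraph (Fin 3)) □ pathGraph n)) : Prop :=
  ∃ v w : Fin 3 × Fin n, (v.2 : ℕ) = n - 1 ∧ (w.2 : ℕ) = n - 1 ∧ T.vcolor v ≠ T.vcolor w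

/-- `a n i`: the number of 2-colored partitions of `K₃ × Pₙ` of size `i` in which all three
vertices of the last triangle have the same color. -/
noncomputable def a (n i : ℕ) : ℕ :=
  Nat.card {T : TwoColoredPartition ((⊤ : SimpleGraph (Fin 3)) □ pathGraph n) //
    T.size = i ∧ sameColorLastTriangle T}

/-- `b n i`: the number of 2-colored partitions of `K₃ × Pₙ` of size `i` in which both colors
occur among the vertices of the last triangle. -/
noncomputable def b (n i : ℕ) : ℕ :=
  Nat.card {T : TwoColoredPartition ((⊤ : SimpleGraph (Fin 3)) □ pathGraph n) //
    T.size = i ∧ bothColorsLastTriangle T}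

/-- `uₙ(y) = ∑_{i ≥ 1} a(n,i) yⁱ ∈ ℤ[y]`. -/
noncomputable def upoly (n : ℕ) : Polynomial ℤ :=
  ∑ᶠ (i : ℕ) (_ : 1 ≤ i), Polynomial.monomial i (a n i : ℤ)

/-- `vₙ(y) = ∑_{i ≥ 1} b(n,i) yⁱ ∈ ℤ[y]`. -/
noncomputable def vpoly (n : ℕ) : Polynomial ℤ :=
  ∑ᶠ (i : ℕ) (_ : 1 ≤ i), Polynomial.monomial i (b n i : ℤ)

/-!
A 2-colored partition of a graph is the same thing as an arbitrary map from the vertices to two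
colors: the parts are forced to be the connected components of the subgraph of monochromatic
edges, so the size of the partition is the number of these components.

Appending a triangle to `K₃ × Pₙ` keeps every old component intact: a monochromatic path that
leaves the old columns through the last old triangle and comes back to it does so at two vertices
of the same color, and these are adjacent in that triangle. Besides, each color `c` of the new
triangle that never sits next to an old vertex of color `c` forms one new component. Checking the
8 colorings of each triangle, the non-constant new triangles contribute `6y` when the old last
triangle is monochromatic and `3 + 2y + y²` otherwise.
-/

open Finset

namespace SimpleGraph

variable {V α : Type*} (G : SimpleGraph V)

def monoGraph (f : V → α) : SimpleGraph V where
  Adj v w := G.Adj v w ∧ f v = f w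
  symm := ⟨fun _ _ h => ⟨h.1.symm, h.2.symm⟩⟩
  loopless := ⟨fun v h => G.loopless.irrefl v h.1⟩

variable {G}

@[simp]
lemma monoGraph_adj {f : V → α} {v w : V} : (G.monoGraph f).Adj v w ↔ G.Adj v w ∧ f v = f w :=
  Iff.rfl

lemma monoGraph_le (f : V → α) : G.monoGraph f ≤ G := fun _ _ h => h.1

lemma Reachable.mem_of_adj_closed {S : Set V} (hS : ∀ ⦃x y⦄, G.Adj x y → x ∈ S → y ∈ S)
    {x y : V} (h : G.Reachable x y) (hx : x ∈ S) : y ∈ S := by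
  obtain ⟨p⟩ := h
  induction p with
  | nil => exact hx
  | cons hadj _ ih => exact ih (hS hadj hx)

lemma Reachable.apply_eq_of_monoGraph {f : V → α} {v w : V} (h : (G.monoGraph f).Reachable v w) :
    f v = f w :=
  h.mem_of_adj_closed (S := {x | f v = f x})
    (fun _ _ hadj hx => hx.trans (monoGraph_adj.1 hadj).2) rfl

def monoColor {f : V → α} : (G.monoGraph f).ConnectedComponent → α :=
  ConnectedComponent.lift f fun _ _ p _ => p.reachable.apply_eq_of_monoGraph

lemma monoColor_eq {f : V → α} {C : (G.monoGraph f).ConnectedComponent} {v : V}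
    (hv : v ∈ C.supp) : monoColor C = f v := by
  rw [← (C.mem_supp_iff v).1 hv]
  rfl

variable (G) in
noncomputable def numMonoComponents (f : V → α) : ℕ :=
  Nat.card (G.monoGraph f).ConnectedComponent

lemma numMonoComponents_top (f : V → α) :
    (⊤ : SimpleGraph V).numMonoComponents f = Nat.card (Set.range f) := by
  refine Nat.card_congr (Equiv.ofBijective (fun C => ⟨monoColor C, ?_⟩) ⟨?_, ?_⟩)
  · obtain ⟨v, hv⟩ := C.nonempty_supp
    exact ⟨v, (monoColor_eq hv).symm⟩
  · refine ConnectedComponent.ind₂ fun v w h => ?_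
    have hvw : f v = f w := congrArg Subtype.val h
    by_cases hne : v = w
    · rw [hne]
    · exact ConnectedComponent.connectedComponentMk_eq_of_adj ⟨hne, hvw⟩
  · rintro ⟨_, v, rfl⟩
    exact ⟨(⊤ : SimpleGraph V).monoGraph f |>.connectedComponentMk v, rfl⟩

end SimpleGraph

namespace TwoColoredPartition

variable {V : Type*} {G : SimpleGraph V}

lemma vcolor_eq_color (T : TwoColoredPartition G) {p : Set V} (hp : p ∈ T.parts) {v : V}
    (hv : v ∈ p) : T.vcolor v = T.color ⟨p, hp⟩ := by
  obtain ⟨hq, hvq⟩ := (T.covers v).choose_spec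
  have hpq : (T.covers v).choose = p :=
    by_contra fun hne => Set.disjoint_left.1 (T.disj _ hq _ hp hne) hvq hv
  unfold vcolor
  congr

lemma ext_of_color {T T' : TwoColoredPartition G} (hparts : T.parts = T'.parts)
    (hcolor : ∀ p (hp : p ∈ T.parts) (hp' : p ∈ T'.parts),
      T.color ⟨p, hp⟩ = T'.color ⟨p, hp'⟩) : T = T' := by
  obtain ⟨parts, _, _, _, _, color, _⟩ := T
  obtain ⟨parts', _, _, _, _, color', _⟩ := T'
  obtain rfl : parts = parts' := hparts
  obtain rfl : color = color' := funext fun p => hcolor p.1 p.2 p.2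
  rfl

lemma monoColor_choose {f : V → Fin 2} {p : Set V}
    (hp : p ∈ Set.range (ConnectedComponent.supp : (G.monoGraph f).ConnectedComponent → Set V))
    {v : V} (hv : v ∈ p) : monoColor hp.choose = f v :=
  monoColor_eq (by rwa [hp.choose_spec])

variable (G) in
noncomputable def ofColoring (f : V → Fin 2) : TwoColoredPartition G where
  parts := Set.range (ConnectedComponent.supp : (G.monoGraph f).ConnectedComponent → Set V)
  nonempty := by
    rintro _ ⟨C, rfl⟩
    exact C.nonempty_supp
  covers v := ⟨_, ⟨_, rfl⟩, ConnectedComponent.connectedComponentMk_mem⟩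
  disj := by
    rintro _ ⟨C, rfl⟩ _ ⟨D, rfl⟩ hne
    exact Set.disjoint_left.2 fun v hC hD =>
      hne (congrArg _ (ConnectedComponent.eq_of_common_vertex hC hD))
  conn := by
    rintro _ ⟨C, rfl⟩
    exact C.connected_toSimpleGraph.mono (comap_monotone _ (monoGraph_le f))
  color p := monoColor p.2.choose
  proper := by
    rintro ⟨_, hC⟩ ⟨_, hD⟩ hne ⟨v, hv, w, hw, hadj⟩ hcol
    obtain ⟨C, rfl⟩ := hC
    obtain ⟨D, rfl⟩ := hD
    rw [monoColor_choose _ hv, monoColor_choose _ hw] at hcol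
    refine hne (Subtype.ext (congrArg ConnectedComponent.supp ?_))
    rw [← (C.mem_supp_iff v).1 hv, ← (D.mem_supp_iff w).1 hw]
    exact ConnectedComponent.connectedComponentMk_eq_of_adj (monoGraph_adj.2 ⟨hadj, hcol⟩)

lemma color_ofColoring {f : V → Fin 2} {p : Set V} (hp : p ∈ (ofColoring G f).parts) {v : V}
    (hv : v ∈ p) : (ofColoring G f).color ⟨p, hp⟩ = f v :=
  monoColor_choose hp hv

lemma vcolor_ofColoring (f : V → Fin 2) : (ofColoring G f).vcolor = f :=
  funext fun v => by
    obtain ⟨p, hp, hv⟩ := (ofColoring G f).covers v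
    rw [vcolor_eq_color _ hp hv, color_ofColoring hp hv]

lemma eq_supp_of_mem_parts (T : TwoColoredPartition G) {p : Set V} (hp : p ∈ T.parts) {v : V}
    (hv : v ∈ p) : p = ((G.monoGraph T.vcolor).connectedComponentMk v).supp := by
  refine Set.Subset.antisymm (fun w hw => ?_) (fun w hw => ?_)
  · -- `p` is connected and monochromatic
    let φ : G.induce p →g G.monoGraph T.vcolor :=
      ⟨Subtype.val, fun {x y} hxy =>
        ⟨hxy, by rw [vcolor_eq_color T hp x.2, vcolor_eq_color T hp y.2]⟩⟩
    exact ConnectedComponent.sound (((T.conn p hp).preconnected ⟨v, hv⟩ ⟨w, hw⟩).map φ).symm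
  · -- properness makes `p` closed under monochromatic edges
    refine (ConnectedComponent.exact hw).symm.mem_of_adj_closed (fun x y hxy hx => ?_) hv
    obtain ⟨q, hq, hy⟩ := T.covers y
    by_contra hyp
    have hpq : (⟨p, hp⟩ : T.parts) ≠ ⟨q, hq⟩ := fun h => hyp (Subtype.mk.inj h ▸ hy)
    refine T.proper _ _ hpq ⟨x, hx, y, hy, hxy.1⟩ ?_
    rw [← vcolor_eq_color T hp hx, ← vcolor_eq_color T hq hy]
    exact hxy.2

lemma parts_eq_range_supp (T : TwoColoredPartition G) :
    T.parts = Set.range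
      (ConnectedComponent.supp : (G.monoGraph T.vcolor).ConnectedComponent → Set V) := by
  refine Set.Subset.antisymm (fun p hp => ?_) ?_
  · obtain ⟨v, hv⟩ := T.nonempty p hp
    exact ⟨_, (T.eq_supp_of_mem_parts hp hv).symm⟩
  · rintro _ ⟨C, rfl⟩
    induction C using ConnectedComponent.ind with | h v => ?_
    obtain ⟨p, hp, hv⟩ := T.covers v
    rwa [← T.eq_supp_of_mem_parts hp hv]

lemma ofColoring_vcolor (T : TwoColoredPartition G) : ofColoring G T.vcolor = T := by
  refine ext_of_color (T.parts_eq_range_supp).symm fun p hp hp' => ?_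
  obtain ⟨v, hv⟩ := T.nonempty p hp'
  rw [color_ofColoring hp hv, vcolor_eq_color T hp' hv]

variable (G) in
noncomputable def equivColoring : TwoColoredPartition G ≃ (V → Fin 2) where
  toFun T := T.vcolor
  invFun := ofColoring G
  left_inv := ofColoring_vcolor
  right_inv := vcolor_ofColoring

lemma size_eq_numMonoComponents (T : TwoColoredPartition G) :
    T.size = G.numMonoComponents T.vcolor := by
  rw [size, parts_eq_range_supp, Set.ncard_range_of_injective ConnectedComponent.supp_injective,
    numMonoComponents]

lemma natCard_size_eq_and [Fintype V] [DecidableEq V] (P : (V → Fin 2) → Prop) [DecidablePred P]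
    (i : ℕ) :
    Nat.card {T : TwoColoredPartition G // T.size = i ∧ P T.vcolor} =
      #{f | P f ∧ G.numMonoComponents f = i} := by
  rw [Nat.card_congr ((equivColoring G).subtypeEquiv (p := fun T => T.size = i ∧ P T.vcolor)
      (q := fun f => P f ∧ G.numMonoComponents f = i)
      fun T => by rw [size_eq_numMonoComponents, and_comm]; rfl),
    Nat.card_eq_fintype_card, Fintype.card_subtype]

end TwoColoredPartition

lemma finsum_monomial_card_filter_eq_sum {ι R : Type*} [CommSemiring R] (s : Finset ι)
    (c : ι → ℕ) (hc : ∀ x ∈ s, 1 ≤ c x) :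
    ∑ᶠ (i : ℕ) (_ : 1 ≤ i), monomial i (#{x ∈ s | c x = i} : R) = ∑ x ∈ s, X ^ c x := by
  have hsupp : (Function.support fun i => monomial i (#{x ∈ s | c x = i} : R)) ⊆ s.image c := by
    intro i hi
    obtain ⟨x, hx⟩ : {x ∈ s | c x = i}.Nonempty :=
      nonempty_iff_ne_empty.2 fun h => hi (by simp only [h, card_empty, Nat.cast_zero, map_zero])
    exact mem_coe.2 (mem_image.2 ⟨x, mem_filter.1 hx⟩)
  have hpos : ∀ i ∈ s.image c, 1 ≤ i := by
    simp only [mem_image, forall_exists_index, and_imp]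
    rintro _ x hx rfl
    exact hc x hx
  rw [finsum_congr fun i => finsum_eq_if, finsum_eq_sum_of_support_subset _ ?_,
    ← sum_fiberwise_of_maps_to (fun x hx => mem_image_of_mem c hx)]
  · refine sum_congr rfl fun i hi => ?_
    rw [if_pos (hpos i hi), sum_congr rfl fun x hx => by rw [(mem_filter.1 hx).2], sum_const,
      nsmul_eq_mul, ← C_mul_X_pow_eq_monomial, map_natCast]
  · refine subset_trans (fun i hi => ?_) hsupp
    refine Function.mem_support.2 fun h => Function.mem_support.1 hi ?_
    rw [h, ite_self]

abbrev prism (n : ℕ) : SimpleGraph (Fin 3 × Fin n) := (⊤ : SimpleGraph (Fin 3)) □ pathGraph n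

section Prism

variable {n : ℕ} {α : Type*}

def initColumns (f : Fin 3 × Fin (n + 1) → α) : Fin 3 × Fin n → α :=
  f ∘ Prod.map id Fin.castSucc

def lastColumn (f : Fin 3 × Fin (n + 1) → α) (i : Fin 3) : α :=
  f (i, Fin.last n)

def columnsEquiv : (Fin 3 × Fin (n + 1) → α) ≃ (Fin 3 × Fin n → α) × (Fin 3 → α) where
  toFun f := (initColumns f, lastColumn f)
  invFun p x := Fin.lastCases (p.2 x.1) (fun j => p.1 (x.1, j)) x.2
  left_inv f := funext fun ⟨i, j⟩ => by
    induction j using Fin.lastCases <;> simp [initColumns, lastColumn]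
  right_inv p := by
    ext ⟨i, j⟩ <;> simp [initColumns, lastColumn]

@[simp]
lemma initColumns_columnsEquiv_symm (p : (Fin 3 × Fin n → α) × (Fin 3 → α)) :
    initColumns (columnsEquiv.symm p) = p.1 :=
  congrArg Prod.fst (columnsEquiv.apply_symm_apply p)

@[simp]
lemma lastColumn_columnsEquiv_symm (p : (Fin 3 × Fin n → α) × (Fin 3 → α)) :
    lastColumn (columnsEquiv.symm p) = p.2 :=
  congrArg Prod.snd (columnsEquiv.apply_symm_apply p)

lemma eq_castSucc_or_eq_last_column (x : Fin 3 × Fin (n + 1)) :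
    (∃ u, x = Prod.map id Fin.castSucc u) ∨ ∃ i, x = (i, Fin.last n) := by
  obtain ⟨i, j⟩ := x
  rcases j.eq_castSucc_or_eq_last with ⟨j, rfl⟩ | rfl
  · exact .inl ⟨(i, j), rfl⟩
  · exact .inr ⟨i, rfl⟩

lemma castSucc_ne_last_column (u : Fin 3 × Fin n) (i : Fin 3) :
    Prod.map id Fin.castSucc u ≠ (i, Fin.last n) :=
  fun h => Fin.castSucc_ne_last u.2 (congrArg Prod.snd h)

lemma prism_adj_same_column {i j : Fin 3} {c : Fin n} : (prism n).Adj (i, c) (j, c) ↔ i ≠ j := by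
  simp [boxProd_adj]

lemma prism_adj_castSucc {u w : Fin 3 × Fin n} :
    (prism (n + 1)).Adj (Prod.map id Fin.castSucc u) (Prod.map id Fin.castSucc w) ↔
      (prism n).Adj u w := by
  simp [boxProd_adj, pathGraph_adj]

lemma prism_adj_castSucc_last {u : Fin 3 × Fin (n + 1)} {i : Fin 3} :
    (prism (n + 2)).Adj (Prod.map id Fin.castSucc u) (i, Fin.last (n + 1)) ↔
      u = (i, Fin.last n) := by
  obtain ⟨j, c⟩ := u
  have := c.isLt
  simp [boxProd_adj, pathGraph_adj, Fin.ext_iff]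
  omega

lemma prism_one : prism 1 = ⊤ := by
  ext ⟨i, c⟩ ⟨j, d⟩
  simp [boxProd_adj, Subsingleton.elim c d]

end Prism

section Components

variable {n : ℕ} {α : Type*}

lemma reachable_monoGraph_prism_of_column {m : ℕ} {g : Fin 3 × Fin m → α} {i j : Fin 3}
    {c : Fin m} (h : g (i, c) = g (j, c)) : ((prism m).monoGraph g).Reachable (i, c) (j, c) := by
  by_cases hij : i = j
  · rw [hij]
  · exact Adj.reachable ⟨prism_adj_same_column.2 hij, h⟩

variable (f : Fin 3 × Fin (n + 2) → α)

def initColumnsHom : (prism (n + 1)).monoGraph (initColumns f) →g (prism (n + 2)).monoGraph f :=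
  ⟨Prod.map id Fin.castSucc, fun h => ⟨prism_adj_castSucc.2 h.1, h.2⟩⟩

variable {f}

lemma reachable_castSucc_iff {u w : Fin 3 × Fin (n + 1)} :
    ((prism (n + 2)).monoGraph f).Reachable (Prod.map id Fin.castSucc u)
      (Prod.map id Fin.castSucc w) ↔ ((prism (n + 1)).monoGraph (initColumns f)).Reachable u w := by
  refine ⟨fun h => ?_, fun h => h.map (initColumnsHom f)⟩
  -- an excursion into the last column leaves and re-enters the old columns at vertices of the
  -- old last column of the same color, and these are joined there
  let S : Set (Fin 3 × Fin (n + 2)) := {x |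
    (∃ v, x = Prod.map id Fin.castSucc v ∧
      ((prism (n + 1)).monoGraph (initColumns f)).Reachable u v) ∨
    ∃ i, x = (i, Fin.last (n + 1)) ∧ f x = initColumns f u ∧
      ∃ j, ((prism (n + 1)).monoGraph (initColumns f)).Reachable u (j, Fin.last n)}
  have hS : ∀ ⦃x y⦄, ((prism (n + 2)).monoGraph f).Adj x y → x ∈ S → y ∈ S := by
    rintro x y hxy (⟨v, rfl, huv⟩ | ⟨i, rfl, hcol, j, huj⟩)
    · rcases eq_castSucc_or_eq_last_column y with ⟨w', rfl⟩ | ⟨i, rfl⟩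
      · exact .inl ⟨w', rfl, huv.trans (Adj.reachable ⟨prism_adj_castSucc.1 hxy.1, hxy.2⟩)⟩
      · obtain rfl := prism_adj_castSucc_last.1 hxy.1
        exact .inr ⟨i, rfl, hxy.2.symm.trans huv.apply_eq_of_monoGraph.symm, i, huv⟩
    · rcases eq_castSucc_or_eq_last_column y with ⟨w', rfl⟩ | ⟨i', rfl⟩
      · obtain rfl := prism_adj_castSucc_last.1 hxy.symm.1
        refine .inl ⟨_, rfl, huj.trans (reachable_monoGraph_prism_of_column ?_)⟩
        exact huj.apply_eq_of_monoGraph.symm.trans (hcol.symm.trans hxy.2)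
      · exact .inr ⟨i', rfl, hxy.2.symm.trans hcol, j, huj⟩
  obtain ⟨v, hv, huv⟩ | ⟨i, hi, -⟩ := h.mem_of_adj_closed hS (.inl ⟨u, rfl, .refl _⟩)
  · rwa [Prod.map_injective.2 ⟨Function.injective_id, Fin.castSucc_injective _⟩ hv]
  · exact absurd hi (castSucc_ne_last_column w i)

lemma injective_map_initColumnsHom :
    Function.Injective (ConnectedComponent.map (initColumnsHom f)) :=
  ConnectedComponent.ind₂ fun _ _ h =>
    ConnectedComponent.sound (reachable_castSucc_iff.1 (ConnectedComponent.exact h))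

lemma exists_eq_mk_last_of_notMem_range {C : ((prism (n + 2)).monoGraph f).ConnectedComponent}
    (hC : C ∉ Set.range (ConnectedComponent.map (initColumnsHom f))) :
    ∃ i, C = ((prism (n + 2)).monoGraph f).connectedComponentMk (i, Fin.last (n + 1)) := by
  induction C using ConnectedComponent.ind with | h x => ?_
  rcases eq_castSucc_or_eq_last_column x with ⟨u, rfl⟩ | ⟨i, rfl⟩
  · exact absurd ⟨_, ConnectedComponent.map_mk _ u⟩ hC
  · exact ⟨i, rfl⟩

/-- The colors of the last column that form components of their own: they occur in `t`, but
never at a position where the previous column `s` has the same color. -/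
def newColors [Fintype α] [DecidableEq α] (s t : Fin 3 → α) : Finset α :=
  {c | (∃ i, t i = c) ∧ ∀ i, t i = c → s i ≠ c}

variable [Fintype α] [DecidableEq α]

lemma monoColor_mem_newColors {C : ((prism (n + 2)).monoGraph f).ConnectedComponent}
    (hC : C ∉ Set.range (ConnectedComponent.map (initColumnsHom f))) :
    monoColor C ∈ newColors (lastColumn (initColumns f)) (lastColumn f) := by
  obtain ⟨i, rfl⟩ := exists_eq_mk_last_of_notMem_range hC
  refine mem_filter.2 ⟨mem_univ _, ⟨i, rfl⟩, fun j hj hs =>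
    hC ⟨((prism (n + 1)).monoGraph (initColumns f)).connectedComponentMk (j, Fin.last n), ?_⟩⟩
  rw [ConnectedComponent.map_mk, ConnectedComponent.eq]
  exact (monoGraph_adj.2 ⟨prism_adj_castSucc_last.2 rfl, hs.trans hj.symm⟩).reachable.trans
    (reachable_monoGraph_prism_of_column (hj.trans rfl))

lemma not_reachable_castSucc_of_mem_newColors {i : Fin 3}
    (hi : f (i, Fin.last (n + 1)) ∈ newColors (lastColumn (initColumns f)) (lastColumn f))
    (u : Fin 3 × Fin (n + 1)) :
    ¬((prism (n + 2)).monoGraph f).Reachable (i, Fin.last (n + 1))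
      (Prod.map id Fin.castSucc u) := by
  intro h
  let S : Set (Fin 3 × Fin (n + 2)) :=
    {x | ∃ j, x = (j, Fin.last (n + 1)) ∧ f x = f (i, Fin.last (n + 1))}
  have hS : ∀ ⦃x y⦄, ((prism (n + 2)).monoGraph f).Adj x y → x ∈ S → y ∈ S := by
    rintro x y hxy ⟨j, rfl, hj⟩
    rcases eq_castSucc_or_eq_last_column y with ⟨w, rfl⟩ | ⟨j', rfl⟩
    · obtain rfl := prism_adj_castSucc_last.1 hxy.symm.1
      exact ((mem_filter.1 hi).2.2 j hj (hxy.2.symm.trans hj)).elim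
    · exact ⟨j', rfl, hxy.2.symm.trans hj⟩
  obtain ⟨j, hj, -⟩ := h.mem_of_adj_closed hS ⟨i, rfl, rfl⟩
  exact castSucc_ne_last_column u j hj

variable (f) in
noncomputable def complRangeEquivNewColors :
    ↥(Set.range (ConnectedComponent.map (initColumnsHom f)))ᶜ ≃
      newColors (lastColumn (initColumns f)) (lastColumn f) := by
  refine Equiv.ofBijective (fun C => ⟨monoColor C.1, monoColor_mem_newColors C.2⟩) ⟨?_, ?_⟩
  · rintro ⟨C, hC⟩ ⟨D, hD⟩ h
    obtain ⟨i, rfl⟩ := exists_eq_mk_last_of_notMem_range hC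
    obtain ⟨j, rfl⟩ := exists_eq_mk_last_of_notMem_range hD
    exact Subtype.ext (ConnectedComponent.sound
      (reachable_monoGraph_prism_of_column (congrArg Subtype.val h)))
  · rintro ⟨c, hc⟩
    obtain ⟨i, rfl⟩ := (mem_filter.1 hc).2.1
    refine ⟨⟨((prism (n + 2)).monoGraph f).connectedComponentMk (i, Fin.last (n + 1)), ?_⟩, rfl⟩
    rintro ⟨C, hC⟩
    induction C using ConnectedComponent.ind with | h u => ?_
    exact not_reachable_castSucc_of_mem_newColors hc u (ConnectedComponent.exact hC).symm

theorem numMonoComponents_prism_succ :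
    (prism (n + 2)).numMonoComponents f =
      (prism (n + 1)).numMonoComponents (initColumns f) +
        #(newColors (lastColumn (initColumns f)) (lastColumn f)) := by
  classical
  rw [numMonoComponents, numMonoComponents,
    ← Nat.card_range_of_injective injective_map_initColumnsHom,
    ← Nat.card_eq_finsetCard, ← Nat.card_congr (complRangeEquivNewColors f), ← Nat.card_sum,
    Nat.card_congr (Equiv.Set.sumCompl _)]

end Components

lemma multiset_map_card_newColors (s : Fin 3 → Fin 2) :
    ({t | ¬∀ i j, t i = t j} : Finset (Fin 3 → Fin 2)).val.map (fun t => #(newColors s t)) =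
      if ∀ i j, s i = s j then {1, 1, 1, 1, 1, 1} else {0, 0, 0, 1, 1, 2} := by
  revert s
  decide

lemma sum_pow_card_newColors (s : Fin 3 → Fin 2) :
    ∑ t : Fin 3 → Fin 2 with ¬∀ i j, t i = t j, (X : ℤ[X]) ^ #(newColors s t) =
      if ∀ i j, s i = s j then 6 * X else 3 + 2 * X + X ^ 2 := by
  have h := congrArg (fun m => (m.map ((X : ℤ[X]) ^ ·)).sum) (multiset_map_card_newColors s)
  simp only [Multiset.map_map, Function.comp_def] at h
  rw [sum_eq_multiset_sum, h]
  split_ifs <;>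
    simp only [Multiset.insert_eq_cons, Multiset.map_cons, Multiset.map_singleton,
      Multiset.sum_cons, Multiset.sum_singleton, pow_zero, pow_one] <;>
    ring

lemma sameColorLastTriangle_iff {n : ℕ} (T : TwoColoredPartition (prism (n + 1))) :
    sameColorLastTriangle T ↔ ∀ i j, lastColumn T.vcolor i = lastColumn T.vcolor j := by
  refine ⟨fun h i j => h _ _ (by simp) (by simp), fun h ⟨i, c⟩ ⟨j, d⟩ hc hd => ?_⟩
  obtain rfl : c = Fin.last n := Fin.ext (by simpa using hc)
  obtain rfl : d = Fin.last n := Fin.ext (by simpa using hd)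
  exact h i j

lemma bothColorsLastTriangle_iff {n : ℕ} (T : TwoColoredPartition (prism (n + 1))) :
    bothColorsLastTriangle T ↔ ¬∀ i j, lastColumn T.vcolor i = lastColumn T.vcolor j := by
  simp only [← sameColorLastTriangle_iff, sameColorLastTriangle, bothColorsLastTriangle, not_forall,
    exists_prop, ne_eq]

lemma finsum_monomial_natCard_size_eq_sum {n : ℕ} (P : TwoColoredPartition (prism (n + 1)) → Prop)
    (Q : (Fin 3 × Fin (n + 1) → Fin 2) → Prop) [DecidablePred Q] (hPQ : ∀ T, P T ↔ Q T.vcolor) :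
    ∑ᶠ (i : ℕ) (_ : 1 ≤ i), monomial i (Nat.card {T // T.size = i ∧ P T} : ℤ) =
      ∑ f with Q f, X ^ (prism (n + 1)).numMonoComponents f := by
  simp_rw [Nat.card_congr (Equiv.subtypeEquivRight fun T => and_congr_right' (hPQ T)),
    TwoColoredPartition.natCard_size_eq_and, ← filter_filter]
  exact finsum_monomial_card_filter_eq_sum _ _ fun f _ => Nat.card_pos

lemma upoly_succ_eq_sum (n : ℕ) :
    upoly (n + 1) = ∑ f : Fin 3 × Fin (n + 1) → Fin 2 with ∀ i j, lastColumn f i = lastColumn f j,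
      X ^ (prism (n + 1)).numMonoComponents f :=
  finsum_monomial_natCard_size_eq_sum _ _ sameColorLastTriangle_iff

lemma vpoly_succ_eq_sum (n : ℕ) :
    vpoly (n + 1) = ∑ f : Fin 3 × Fin (n + 1) → Fin 2 with ¬∀ i j, lastColumn f i = lastColumn f j,
      X ^ (prism (n + 1)).numMonoComponents f :=
  finsum_monomial_natCard_size_eq_sum _ _ bothColorsLastTriangle_iff

lemma vpoly_one : vpoly 1 = 6 * X ^ 2 := by
  have hcomp : ∀ f : Fin 3 × Fin 1 → Fin 2, (¬∀ i j, lastColumn f i = lastColumn f j) →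
      (prism 1).numMonoComponents f = 2 := by
    intro f hf
    obtain ⟨i, j, hij⟩ : ∃ i j, lastColumn f i ≠ lastColumn f j := by
      simpa only [not_forall] using hf
    have hrange : Set.range f = Set.univ := Set.eq_univ_of_forall fun c => by
      obtain h | h : c = lastColumn f i ∨ c = lastColumn f j := by omega
      exacts [⟨_, h.symm⟩, ⟨_, h.symm⟩]
    rw [prism_one, numMonoComponents_top, hrange, Nat.card_congr (Equiv.Set.univ _), Nat.card_fin]
  have hcard : #{f : Fin 3 × Fin 1 → Fin 2 | ¬∀ i j, lastColumn f i = lastColumn f j} = 6 := by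
    decide
  rw [vpoly_succ_eq_sum 0, sum_congr rfl fun f hf => by rw [hcomp f (mem_filter.1 hf).2],
    sum_const, hcard, nsmul_eq_mul, Nat.cast_ofNat]

lemma vpoly_succ_succ (n : ℕ) :
    vpoly (n + 2) = 6 * X * upoly (n + 1) + (3 + 2 * X + X ^ 2) * vpoly (n + 1) := by
  rw [vpoly_succ_eq_sum, upoly_succ_eq_sum, vpoly_succ_eq_sum]
  calc ∑ f with ¬∀ i j, lastColumn f i = lastColumn f j, X ^ (prism (n + 2)).numMonoComponents f
      = ∑ g : Fin 3 × Fin (n + 1) → Fin 2, ∑ t : Fin 3 → Fin 2 with ¬∀ i j, t i = t j,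
          X ^ ((prism (n + 1)).numMonoComponents g + #(newColors (lastColumn g) t)) := by
        rw [sum_filter, ← (columnsEquiv (α := Fin 2)).symm.sum_comp, Fintype.sum_prod_type]
        simp_rw [sum_filter, numMonoComponents_prism_succ, initColumns_columnsEquiv_symm,
          lastColumn_columnsEquiv_symm]
    _ = ∑ g : Fin 3 × Fin (n + 1) → Fin 2, X ^ (prism (n + 1)).numMonoComponents g *
          if ∀ i j, lastColumn g i = lastColumn g j then 6 * X else 3 + 2 * X + X ^ 2 := by
        simp_rw [pow_add, ← mul_sum, sum_pow_card_newColors]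
    _ = _ := by
        simp_rw [mul_ite, sum_ite, mul_sum, mul_comm (X ^ _)]

/-- `v₁(y) = 6y²`, and for all `n ≥ 2`, `vₙ(y) = 6y·u_{n-1}(y) + (3 + 2y + y²)·v_{n-1}(y)`.
Equivalently, `T₂ = 6xy² + 6xy·T₁ + 3x·T₂ + 2xy·T₂ + xy²·T₂` for the corresponding
bivariate generating functions. -/
theorem vpoly_recurrence :
    vpoly 1 = 6 * Polynomial.X ^ 2 ∧
    ∀ n : ℕ, 2 ≤ n →
      vpoly n = 6 * Polynomial.X * upoly (n - 1)
        + (3 + 2 * Polynomial.X + Polynomial.X ^ 2) * vpoly (n - 1) := by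
  refine ⟨vpoly_one, fun n hn => ?_⟩
  obtain ⟨n, rfl⟩ := Nat.exists_eq_add_of_le' hn
  exact vpoly_succ_succ n
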